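/- arXiv:2307.15808 — 3 statements merged into one kernel-verified Lean document; each statement's English description precedes it below -/
import Mathlib

section
/- For all d > 0, v > 1, u1 with 0 ≤ u1 < 1 ≤ v, and u2 with 0 < u2 ≤ v, the quantity (2dv² + 2d·u2·v + d·u1·v² + d·u1·v + d·u2·v² + d·v·u2)/(2·u2·v·(v - u1)) is minimized (over admissible u1, u2) at u1 = 0, u2 = v, where it equals d(v+5)/(2v). -/
/-! Cancelling the common factor `v` puts the evacuation time in the form
`d (2v + (v+3) u₂ + (v+1) u₁) / (2 u₂ (v - u₁))`, whose numerator grows and whose denominator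
shrinks with `u₁`, so `u₁ = 0` is optimal. At `u₁ = 0` the time is `d (v+3)/(2v) + d/u₂`,
which decreases in `u₂`, so `u₂ = v` is optimal. -/

noncomputable def receiverFirstTime (d v u₁ u₂ : ℝ) : ℝ :=
  d * (2 * v + (v + 3) * u₂ + (v + 1) * u₁) / (2 * u₂ * (v - u₁))

section receiverFirstTime

variable {d v u₁ u₂ : ℝ}

theorem receiverFirstTime_eq (hv : v ≠ 0) :
    (2*d*v^2 + 2*d*u₂*v + d*u₁*v^2 + d*u₁*v + d*u₂*v^2 + d*v*u₂) / (2*u₂*v*(v - u₁)) =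
      receiverFirstTime d v u₁ u₂ := by
  rw [receiverFirstTime, ← mul_div_mul_right _ (2 * u₂ * (v - u₁)) hv]
  congr 1 <;> ring

theorem receiverFirstTime_zero_left_le (hd : 0 ≤ d) (hv : 0 < v) (h₁ : 0 ≤ u₁) (h₁v : u₁ < v)
    (h₂ : 0 < u₂) : receiverFirstTime d v 0 u₂ ≤ receiverFirstTime d v u₁ u₂ := by
  unfold receiverFirstTime
  gcongr

theorem receiverFirstTime_zero_left (hv : v ≠ 0) (h₂ : u₂ ≠ 0) :
    receiverFirstTime d v 0 u₂ = d * (v + 3) / (2 * v) + d / u₂ := by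
  unfold receiverFirstTime
  field_simp
  ring

theorem receiverFirstTime_zero_self (hv : v ≠ 0) :
    receiverFirstTime d v 0 v = d * (v + 5) / (2 * v) := by
  rw [receiverFirstTime_zero_left hv hv]
  field_simp
  ring

theorem receiverFirstTime_zero_self_le (hd : 0 ≤ d) (h₂ : 0 < u₂) (h₂v : u₂ ≤ v) :
    receiverFirstTime d v 0 v ≤ receiverFirstTime d v 0 u₂ := by
  have hv : 0 < v := h₂.trans_le h₂v
  rw [receiverFirstTime_zero_left hv.ne' hv.ne', receiverFirstTime_zero_left hv.ne' h₂.ne']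
  gcongr

end receiverFirstTime

theorem stmt2 (d v : ℝ) (hd : 0 < d) (hv : 1 < v) :
    (∀ u1 u2 : ℝ, 0 ≤ u1 → u1 < 1 → 0 < u2 → u2 ≤ v →
      d * (v + 5) / (2 * v) ≤
        (2*d*v^2 + 2*d*u2*v + d*u1*v^2 + d*u1*v + d*u2*v^2 + d*v*u2) /
          (2*u2*v*(v - u1))) ∧
    (2*d*v^2 + 2*d*v*v + d*0*v^2 + d*0*v + d*v*v^2 + d*v*v) /
      (2*v*v*(v - 0)) = d * (v + 5) / (2 * v) := by
  have hv₀ : 0 < v := by linarith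
  refine ⟨fun u1 u2 h₁ h₁' h₂ h₂v => ?_, ?_⟩
  · calc d * (v + 5) / (2 * v) = receiverFirstTime d v 0 v :=
          (receiverFirstTime_zero_self hv₀.ne').symm
      _ ≤ receiverFirstTime d v 0 u2 := receiverFirstTime_zero_self_le hd.le h₂ h₂v
      _ ≤ receiverFirstTime d v u1 u2 :=
          receiverFirstTime_zero_left_le hd.le hv₀ h₁ (by linarith) h₂
      _ = _ := (receiverFirstTime_eq hv₀.ne').symm
  · rw [receiverFirstTime_eq hv₀.ne', receiverFirstTime_zero_self hv₀.ne']
end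

section
/- Let 1 ≤ v ≤ 3 and u1 = (-(7v+v²) + v·√(v²+30v+97))/(2v+6). Then 0 < u1 ≤ 1. -/
/-!
`u1` is the larger root `(-b + √(discrim a b c)) / (2a)` of `a u² + b u + c` with `a = 3 + v`,
`b = 7v + v²`, `c = -4v²`. Since `a > 0 > c`, this root is positive and lies below every
`x ≥ 0` at which the quadratic is nonnegative; at `x = 1` the quadratic equals `(3v + 1)(3 - v)`.
-/

noncomputable def quadRoot (a b c : ℝ) : ℝ :=
  (-b + Real.sqrt (discrim a b c)) / (2 * a)

section quadRoot

variable {a b c : ℝ}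

theorem quadRoot_pos (ha : 0 < a) (hc : c < 0) : 0 < quadRoot a b c := by
  have hb : b < Real.sqrt (discrim a b c) :=
    Real.lt_sqrt_of_sq_lt (by rw [discrim]; nlinarith)
  exact div_pos (by linarith) (by linarith)

theorem quadRoot_le_of_nonneg_eval (ha : 0 < a) (hc : c < 0) {x : ℝ} (hx0 : 0 ≤ x)
    (hx : 0 ≤ a * x * x + b * x + c) : quadRoot a b c ≤ x := by
  have hslope : 0 < a * x + b := pos_of_mul_pos_right (by nlinarith : 0 < x * (a * x + b)) hx0
  have hvertex : 0 < 2 * a * x + b := by nlinarith [mul_nonneg ha.le hx0]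
  have hsqrt : Real.sqrt (discrim a b c) ≤ 2 * a * x + b :=
    (Real.sqrt_le_left hvertex.le).2 (by rw [discrim]; nlinarith)
  rw [quadRoot, div_le_iff₀ (by linarith)]
  linarith

end quadRoot

theorem stmt5 (v : ℝ) (hv1 : 1 ≤ v) (hv3 : v ≤ 3) :
    let u1 := (-(7*v + v^2) + v * Real.sqrt (v^2 + 30*v + 97)) / (2*v + 6)
    0 < u1 ∧ u1 ≤ 1 := by
  intro u1
  have hu1 : u1 = quadRoot (3 + v) (7*v + v^2) (-4*v^2) := by
    have hdisc : discrim (3 + v) (7*v + v^2) (-4*v^2) = v^2 * (v^2 + 30*v + 97) := by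
      rw [discrim]; ring
    simp only [u1]
    rw [quadRoot, hdisc, Real.sqrt_mul (by positivity), Real.sqrt_sq (by linarith)]
    ring
  have ha : (0 : ℝ) < 3 + v := by linarith
  have hc : -4*v^2 < 0 := by nlinarith
  rw [hu1]
  refine ⟨quadRoot_pos ha hc, quadRoot_le_of_nonneg_eval ha hc zero_le_one ?_⟩
  nlinarith [mul_nonneg (by linarith : (0 : ℝ) ≤ 3 * v + 1) (sub_nonneg.2 hv3)]
end

section
/- Let v > 1, d > 0, and k a natural number with 2^(k-2) < d ≤ 2^k (k ≥ 2). Then 2·(2^0 + 2^1 + ⋯ + 2^(k-1))/v + d − x + x/v ≤ 9d/v + d/2 − d/(2v²), where x = d/2 − d/(2v). -/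
/-! The bike ride costs `2(2^k - 1)/v` and the walk back costs `d/2 + d/v - d/(2v²)`, so the
claim reduces to `2^k - 1 ≤ 4d`, which follows from `2^k = 4 · 2^(k-2) < 4d`. -/

open Finset

theorem geom_sum_two_pow (k : ℕ) : ∑ j ∈ range k, (2 : ℝ) ^ j = 2 ^ k - 1 := by
  rw [geom_sum_eq (by norm_num)]
  ring

theorem two_pow_lt_four_mul {d : ℝ} {k : ℕ} (hk : 2 ≤ k) (h : (2 : ℝ) ^ (k - 2) < d) :
    (2 : ℝ) ^ k < 4 * d := by
  obtain ⟨m, rfl⟩ := Nat.exists_eq_add_of_le' hk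
  rw [Nat.add_sub_cancel, pow_add] at *
  linarith

theorem sub_add_div_backtrack {v : ℝ} (hv : v ≠ 0) (d : ℝ) :
    d - (d / 2 - d / (2 * v)) + (d / 2 - d / (2 * v)) / v = d / 2 + d / v - d / (2 * v ^ 2) := by
  field_simp
  ring

theorem stmt11_general (v d : ℝ) (hv : 1 < v) (k : ℕ) (hk : 2 ≤ k)
    (h1 : (2:ℝ)^(k-2) < d) :
    let x := d / 2 - d / (2*v)
    2 * (∑ j ∈ Finset.range k, (2:ℝ)^j) / v + d - x + x / v ≤
      9*d/v + d/2 - d/(2*v^2) := by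
  intro x
  have hv0 : 0 < v := one_pos.trans hv
  have hwalk : d - x + x / v = d / 2 + d / v - d / (2 * v ^ 2) := sub_add_div_backtrack hv0.ne' d
  have hride : 2 * (2 ^ k - 1) / v ≤ 8 * d / v := by
    apply div_le_div_of_nonneg_right _ hv0.le
    linarith [two_pow_lt_four_mul hk h1]
  calc 2 * (∑ j ∈ range k, (2:ℝ)^j) / v + d - x + x / v
      = 2 * (2 ^ k - 1) / v + (d - x + x / v) := by rw [geom_sum_two_pow]; ring
    _ ≤ 8 * d / v + (d / 2 + d / v - d / (2 * v ^ 2)) := by rw [hwalk]; gcongr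
    _ = 9*d/v + d/2 - d/(2*v^2) := by ring

theorem stmt11 (v d : ℝ) (hv : 1 < v) (hd : 0 < d) (k : ℕ) (hk : 2 ≤ k)
    (h1 : (2:ℝ)^(k-2) < d) (h2 : d ≤ (2:ℝ)^k) :
    let x := d / 2 - d / (2*v)
    2 * (∑ j ∈ Finset.range k, (2:ℝ)^j) / v + d - x + x / v ≤
      9*d/v + d/2 - d/(2*v^2) :=
  stmt11_general v d hv k hk h1
end
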